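/- There is an absolute constant C' > 0 such that for every d ≥ 0 and every nonzero w ∈ 𝔯: (1/3)·∫_{−1}^{2} ‖(a_d u_r)·w·(a_d u_r)^{−1}‖^{−1/3} dr ≤ C'·e^{−d/3}·‖w‖^{−1/3}. (Here (a_d u_r)·w·(a_d u_r)^{−1} is again a trace-zero matrix, namely Ad(a_d u_r)w.) -/

import Mathlib

open Real MeasureTheory
open scoped Classical

noncomputable section

/-- `𝔯`, the space of trace-zero 2×2 real matrices, identified with `ℝ³` via the
coordinates `(w₁₁, w₁₂, w₂₁)` (the remaining entry being `w₂₂ = −w₁₁`). -/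
abbrev frakr : Type := ℝ × ℝ × ℝ

/-- The norm `‖w‖ = max (|w₁₁|, |w₁₂|, |w₂₁|)` on `𝔯`. -/
def rnorm (w : frakr) : ℝ := max |w.1| (max |w.2.1| |w.2.2|)

/-- The ball `B_𝔯(w₀, b)` in `𝔯`. -/
def rball (w₀ : frakr) (b : ℝ) : Set frakr := {w | rnorm (w - w₀) < b}

/-- `ξ_r(w) = −w₂₁ r² − 2 w₁₁ r + w₁₂`, the `(1,2)` entry of `Ad(u_r) w`. -/
def xi (r : ℝ) (w : frakr) : ℝ := -w.2.2 * r ^ 2 - 2 * w.1 * r + w.2.1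

/-- The trace-zero 2×2 real matrix corresponding to `w ∈ 𝔯`. -/
def toMat (w : frakr) : Matrix (Fin 2) (Fin 2) ℝ := !![w.1, w.2.1; w.2.2, -w.1]

/-- The upper-triangular unipotent matrix `u_r` in `SL(2,ℝ)`. -/
def uMat (r : ℝ) : Matrix (Fin 2) (Fin 2) ℝ := !![1, r; 0, 1]

/-- The diagonal matrix `a_t = diag (e^{t/2}, e^{−t/2})` in `SL(2,ℝ)`. -/
noncomputable def aMat (t : ℝ) : Matrix (Fin 2) (Fin 2) ℝ :=
  !![Real.exp (t / 2), 0; 0, Real.exp (-t / 2)]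

/-- The norm `max (|A₁₁|, |A₁₂|, |A₂₁|)` of a 2×2 matrix (for trace-zero matrices this is
the norm `‖·‖` of `𝔯`). -/
def mnorm (A : Matrix (Fin 2) (Fin 2) ℝ) : ℝ := max |A 0 0| (max |A 0 1| |A 1 0|)

/-! The `(1,2)` entry of `Ad(a_d u_r) w` is `e^d ξ_r(w)`, and `ξ_r(w)` is a real quadratic
polynomial in `r` whose coefficients dominate `‖w‖`. Over `ℂ` it factors into two linear forms
`a r + b`, and each of them is bounded below on `|r| ≤ R` by `max ‖a‖ ‖b‖ · |r - x|` (up to a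
constant) for a suitable real `x`: the real part of its root when `‖b‖ ≲ ‖a‖`, and `0` otherwise.
Hence `|ξ_r(w)| ≳ ‖w‖ |r - x₁| |r - x₂|`, and by AM-GM the integrand is
`≲ e^{-d/3} ‖w‖^{-1/3} (|r - x₁|^{-2/3} + |r - x₂|^{-2/3})`, which is integrable. -/

open Polynomial in
theorem exists_quadratic_coeffs_eq_mul {K : Type*} [Field K] [IsAlgClosed K] (α β γ : K) :
    ∃ a₁ b₁ a₂ b₂ : K, α = a₁ * a₂ ∧ β = a₁ * b₂ + b₁ * a₂ ∧ γ = b₁ * b₂ := by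
  rcases eq_or_ne α 0 with rfl | hα
  · exact ⟨β, γ, 0, 1, by ring, by ring, by ring⟩
  obtain ⟨z, hz⟩ := IsAlgClosed.exists_root (C α * X ^ 2 + C β * X + C γ)
    (by rw [degree_quadratic hα]; decide)
  simp only [IsRoot, eval_add, eval_mul, eval_C, eval_pow, eval_X] at hz
  refine ⟨α, -(α * z), 1, β / α + z, by ring, by field_simp; ring, ?_⟩
  field_simp
  linear_combination hz

theorem exists_abs_sub_mul_le_norm_mul_add (a b : ℂ) {R : ℝ} (hR : 0 ≤ R) :
    ∃ x : ℝ, |x| ≤ 2 * R ∧ ∀ r : ℝ, |r| ≤ R →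
      max ‖a‖ ‖b‖ * |r - x| ≤ (2 * R + 2) * ‖a * r + b‖ := by
  by_cases hba : ‖b‖ ≤ 2 * R * ‖a‖
  · rcases eq_or_ne a 0 with rfl | ha
    · obtain rfl : b = 0 := norm_le_zero_iff.mp (by simpa using hba)
      exact ⟨0, by simpa using hR, fun r _ => by simp⟩
    have hna : 0 < ‖a‖ := norm_pos_iff.mpr ha
    refine ⟨-(b / a).re, ?_, fun r _ => ?_⟩
    · rw [abs_neg]
      calc |(b / a).re| ≤ ‖b / a‖ := Complex.abs_re_le_norm _
        _ = ‖b‖ / ‖a‖ := norm_div b a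
        _ ≤ 2 * R := (div_le_iff₀ hna).mpr hba
    have hmax : max ‖a‖ ‖b‖ ≤ (2 * R + 2) * ‖a‖ := max_le (by nlinarith) (by nlinarith)
    have hre : |r - -(b / a).re| ≤ ‖(r : ℂ) + b / a‖ := by
      simpa using Complex.abs_re_le_norm ((r : ℂ) + b / a)
    have hfac : a * r + b = a * (r + b / a) := by field_simp
    calc max ‖a‖ ‖b‖ * |r - -(b / a).re| ≤ (2 * R + 2) * ‖a‖ * ‖(r : ℂ) + b / a‖ :=
          mul_le_mul hmax hre (abs_nonneg _) (by positivity)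
      _ = (2 * R + 2) * ‖a * r + b‖ := by rw [hfac, norm_mul, mul_assoc]
  · push Not at hba
    refine ⟨0, by simpa using hR, fun r hr => ?_⟩
    have hlow : ‖b‖ - R * ‖a‖ ≤ ‖a * r + b‖ := by
      have := norm_sub_norm_le b (-(a * r))
      have har : ‖a * r‖ ≤ R * ‖a‖ := by
        rw [norm_mul, Complex.norm_real, Real.norm_eq_abs, mul_comm]
        exact mul_le_mul_of_nonneg_right hr (norm_nonneg a)
      rw [norm_neg, sub_neg_eq_add, add_comm] at this
      linarith
    have hb : ‖b‖ ≤ 2 * ‖a * r + b‖ := by linarith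
    have ha : R * ‖a‖ ≤ ‖a * r + b‖ := by linarith
    rw [sub_zero]
    calc max ‖a‖ ‖b‖ * |r| ≤ max ‖a‖ ‖b‖ * R := by gcongr
      _ = max (‖a‖ * R) (‖b‖ * R) := max_mul_of_nonneg _ _ hR
      _ ≤ (2 * R + 2) * ‖a * r + b‖ := max_le (by nlinarith [norm_nonneg (a * r + b)])
          (by nlinarith [mul_le_mul_of_nonneg_left hb hR, norm_nonneg (a * r + b)])

theorem exists_mul_abs_sub_mul_abs_sub_le_abs_quadratic (α β γ : ℝ) {R : ℝ} (hR : 0 ≤ R) :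
    ∃ x₁ x₂ : ℝ, |x₁| ≤ 2 * R ∧ |x₂| ≤ 2 * R ∧ ∀ r : ℝ, |r| ≤ R →
      max |α| (max |β| |γ|) * (|r - x₁| * |r - x₂|) ≤
        2 * (2 * R + 2) ^ 2 * |α * r ^ 2 + β * r + γ| := by
  obtain ⟨a₁, b₁, a₂, b₂, hα, hβ, hγ⟩ := exists_quadratic_coeffs_eq_mul (α : ℂ) β γ
  obtain ⟨x₁, hx₁, h₁⟩ := exists_abs_sub_mul_le_norm_mul_add a₁ b₁ hR
  obtain ⟨x₂, hx₂, h₂⟩ := exists_abs_sub_mul_le_norm_mul_add a₂ b₂ hR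
  refine ⟨x₁, x₂, hx₁, hx₂, fun r hr => ?_⟩
  set M₁ := max ‖a₁‖ ‖b₁‖
  set M₂ := max ‖a₂‖ ‖b₂‖
  have hM₁ : 0 ≤ M₁ := le_max_of_le_left (norm_nonneg _)
  have hM₂ : 0 ≤ M₂ := le_max_of_le_left (norm_nonneg _)
  have habs (t : ℝ) : |t| = ‖(t : ℂ)‖ := by rw [Complex.norm_real, Real.norm_eq_abs]
  have hcoeff : max |α| (max |β| |γ|) ≤ 2 * (M₁ * M₂) := by
    have e₁ : ‖a₁‖ ≤ M₁ := le_max_left _ _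
    have e₂ : ‖b₁‖ ≤ M₁ := le_max_right _ _
    have e₃ : ‖a₂‖ ≤ M₂ := le_max_left _ _
    have e₄ : ‖b₂‖ ≤ M₂ := le_max_right _ _
    have hα' : |α| ≤ M₁ * M₂ := by
      rw [habs, hα, norm_mul]
      exact mul_le_mul e₁ e₃ (norm_nonneg _) hM₁
    have hβ' : |β| ≤ 2 * (M₁ * M₂) := by
      rw [habs, hβ]
      refine (norm_add_le _ _).trans ?_
      rw [norm_mul, norm_mul]
      nlinarith [mul_le_mul e₁ e₄ (norm_nonneg _) hM₁, mul_le_mul e₂ e₃ (norm_nonneg _) hM₁]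
    have hγ' : |γ| ≤ M₁ * M₂ := by
      rw [habs, hγ, norm_mul]
      exact mul_le_mul e₂ e₄ (norm_nonneg _) hM₁
    have hM : 0 ≤ M₁ * M₂ := mul_nonneg hM₁ hM₂
    exact max_le (by linarith) (max_le hβ' (by linarith))
  have hfactor : ((α * r ^ 2 + β * r + γ : ℝ) : ℂ) = (a₁ * r + b₁) * (a₂ * r + b₂) := by
    push_cast
    rw [hα, hβ, hγ]
    ring
  have hval : |α * r ^ 2 + β * r + γ| = ‖a₁ * r + b₁‖ * ‖a₂ * r + b₂‖ := by
    rw [habs, hfactor, norm_mul]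
  calc max |α| (max |β| |γ|) * (|r - x₁| * |r - x₂|)
      ≤ 2 * (M₁ * M₂) * (|r - x₁| * |r - x₂|) := by gcongr
    _ = 2 * ((M₁ * |r - x₁|) * (M₂ * |r - x₂|)) := by ring
    _ ≤ 2 * (((2 * R + 2) * ‖a₁ * r + b₁‖) * ((2 * R + 2) * ‖a₂ * r + b₂‖)) := by
        gcongr 2 * (?_ * ?_)
        exacts [h₁ r hr, h₂ r hr]
    _ = 2 * (2 * R + 2) ^ 2 * |α * r ^ 2 + β * r + γ| := by rw [hval]; ring

section AbsRpow

variable {p : ℝ}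

theorem intervalIntegrable_abs_rpow (hp : -1 < p) (a b : ℝ) :
    IntervalIntegrable (fun s : ℝ => |s| ^ p) volume a b := by
  have hpos (c : ℝ) (hc : 0 ≤ c) : IntervalIntegrable (fun s : ℝ => |s| ^ p) volume 0 c :=
    (intervalIntegral.intervalIntegrable_rpow' hp).congr fun s hs => by
      rw [Set.uIoc_of_le hc] at hs
      simp only [abs_of_pos hs.1]
  have hzero (c : ℝ) : IntervalIntegrable (fun s : ℝ => |s| ^ p) volume 0 c := by
    rcases le_total 0 c with hc | hc
    · exact hpos c hc
    · simpa using (hpos (-c) (by linarith)).comp_sub_left 0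
  exact (hzero a).symm.trans (hzero b)

theorem integral_abs_rpow_neg_self (hp : -1 < p) {c : ℝ} (hc : 0 ≤ c) :
    ∫ s in -c..c, |s| ^ p = 2 * c ^ (p + 1) / (p + 1) := by
  have hhalf : ∫ s in (0 : ℝ)..c, |s| ^ p = c ^ (p + 1) / (p + 1) := by
    rw [intervalIntegral.integral_congr fun s hs => ?_, integral_rpow (Or.inl hp),
      zero_rpow (by linarith), sub_zero]
    rw [Set.uIcc_of_le hc] at hs
    simp only [abs_of_nonneg hs.1]
  have hneg : ∫ s in -c..0, |s| ^ p = ∫ s in (0 : ℝ)..c, |s| ^ p := by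
    simpa using (intervalIntegral.integral_comp_neg (a := 0) (b := c) fun s => |s| ^ p).symm
  rw [← intervalIntegral.integral_add_adjacent_intervals (b := 0)
    (intervalIntegrable_abs_rpow hp _ _) (intervalIntegrable_abs_rpow hp _ _), hneg, hhalf]
  ring

theorem intervalIntegrable_abs_sub_rpow (hp : -1 < p) (x a b : ℝ) :
    IntervalIntegrable (fun r : ℝ => |r - x| ^ p) volume a b := by
  simpa using (intervalIntegrable_abs_rpow hp (a - x) (b - x)).comp_sub_right x

theorem integral_abs_sub_rpow_le (hp : -1 < p) {a b c x : ℝ} (hab : a ≤ b)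
    (ha : -c ≤ a - x) (hb : b - x ≤ c) :
    ∫ r in a..b, |r - x| ^ p ≤ 2 * c ^ (p + 1) / (p + 1) := by
  rw [intervalIntegral.integral_comp_sub_right (fun s => |s| ^ p),
    ← integral_abs_rpow_neg_self hp (by linarith)]
  exact intervalIntegral.integral_mono_interval ha (by linarith) hb
    (ae_of_all _ fun s => rpow_nonneg (abs_nonneg s) p) (intervalIntegrable_abs_rpow hp _ _)

end AbsRpow

theorem mul_rpow_le_add_rpow_two_mul_div_two {u v : ℝ} (hu : 0 ≤ u) (hv : 0 ≤ v) (p : ℝ) :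
    (u * v) ^ p ≤ (u ^ (2 * p) + v ^ (2 * p)) / 2 := by
  rw [mul_rpow hu hv, mul_comm 2, rpow_mul hu, rpow_mul hv, rpow_two, rpow_two]
  nlinarith [sq_nonneg (u ^ p - v ^ p)]

theorem conj_apply_zero_one (d r : ℝ) (w : frakr) :
    (aMat d * uMat r * toMat w * uMat (-r) * aMat (-d)) 0 1 = exp d * xi r w := by
  have hexp : exp (d / 2) * exp (d / 2) = exp d := by rw [← exp_add, add_halves]
  simp only [aMat, uMat, toMat, xi, Matrix.mul_apply, Fin.sum_univ_two, Matrix.of_apply,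
    Matrix.cons_val', Matrix.cons_val_zero, Matrix.cons_val_one, Matrix.cons_val_fin_one,
    mul_one, mul_zero, add_zero, zero_add, mul_neg, neg_mul, neg_neg]
  linear_combination (-(w.2.2 * r ^ 2) - 2 * w.1 * r + w.2.1) * hexp

theorem exp_mul_abs_xi_le_mnorm_conj (d r : ℝ) (w : frakr) :
    exp d * |xi r w| ≤ mnorm (aMat d * uMat r * toMat w * uMat (-r) * aMat (-d)) := by
  rw [mnorm, conj_apply_zero_one, abs_mul, abs_of_pos (exp_pos d)]
  exact le_max_of_le_right (le_max_left _ _)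

theorem rnorm_pos {w : frakr} (hw : w ≠ 0) : 0 < rnorm w := by
  obtain ⟨a, b, c⟩ := w
  by_contra! h
  have hle (t : ℝ) (ht : |t| ≤ rnorm (a, b, c)) : t = 0 := abs_nonpos_iff.mp (ht.trans h)
  exact hw (by simp only [rnorm] at hle; simp [hle a (le_max_left _ _),
    hle b ((le_max_left _ _).trans (le_max_right _ _)),
    hle c ((le_max_right _ _).trans (le_max_right _ _))])

theorem exists_rnorm_mul_le_abs_xi (w : frakr) :
    ∃ x₁ x₂ : ℝ, |x₁| ≤ 4 ∧ |x₂| ≤ 4 ∧ ∀ r : ℝ, |r| ≤ 2 →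
      rnorm w * (|r - x₁| * |r - x₂|) ≤ 72 * |xi r w| := by
  obtain ⟨x₁, x₂, hx₁, hx₂, h⟩ :=
    exists_mul_abs_sub_mul_abs_sub_le_abs_quadratic (-w.2.2) (-(2 * w.1)) w.2.1 zero_le_two
  refine ⟨x₁, x₂, by linarith, by linarith, fun r hr => ?_⟩
  have hcoeff : rnorm w ≤ max |-w.2.2| (max |-(2 * w.1)| |w.2.1|) := by
    simp only [rnorm, abs_neg, abs_mul, abs_two]
    refine max_le ?_ (max_le (le_max_of_le_right (le_max_right _ _)) (le_max_left _ _))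
    exact le_max_of_le_right (le_max_of_le_left (by linarith [abs_nonneg w.1]))
  calc rnorm w * (|r - x₁| * |r - x₂|)
      ≤ max |-w.2.2| (max |-(2 * w.1)| |w.2.1|) * (|r - x₁| * |r - x₂|) := by gcongr
    _ ≤ 72 * |xi r w| := by
      convert h r hr using 3
      · norm_num
      · simp only [xi]; ring

theorem exists_mnorm_conj_rpow_le (d : ℝ) {w : frakr} (hw : w ≠ 0) :
    ∃ x₁ x₂ : ℝ, |x₁| ≤ 4 ∧ |x₂| ≤ 4 ∧ ∀ r : ℝ, |r| ≤ 2 → r ≠ x₁ → r ≠ x₂ →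
      mnorm (aMat d * uMat r * toMat w * uMat (-r) * aMat (-d)) ^ (-(1 / 3 : ℝ)) ≤
        exp (-d / 3) * (rnorm w / 72) ^ (-(1 / 3 : ℝ)) *
          ((|r - x₁| ^ (-(2 / 3 : ℝ)) + |r - x₂| ^ (-(2 / 3 : ℝ))) / 2) := by
  obtain ⟨x₁, x₂, hx₁, hx₂, h⟩ := exists_rnorm_mul_le_abs_xi w
  refine ⟨x₁, x₂, hx₁, hx₂, fun r hr hr₁ hr₂ => ?_⟩
  have hρ : 0 < rnorm w / 72 := by linarith [rnorm_pos hw]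
  have hdist : 0 < |r - x₁| * |r - x₂| := by
    have := abs_pos.mpr (sub_ne_zero.mpr hr₁)
    have := abs_pos.mpr (sub_ne_zero.mpr hr₂)
    positivity
  have hlow : exp d * (rnorm w / 72 * (|r - x₁| * |r - x₂|)) ≤
      mnorm (aMat d * uMat r * toMat w * uMat (-r) * aMat (-d)) :=
    le_trans (by gcongr; linarith [h r hr]) (exp_mul_abs_xi_le_mnorm_conj d r w)
  calc mnorm (aMat d * uMat r * toMat w * uMat (-r) * aMat (-d)) ^ (-(1 / 3 : ℝ))
      ≤ (exp d * (rnorm w / 72 * (|r - x₁| * |r - x₂|))) ^ (-(1 / 3 : ℝ)) :=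
        rpow_le_rpow_of_nonpos (by positivity) hlow (by norm_num)
    _ = exp (-d / 3) * (rnorm w / 72) ^ (-(1 / 3 : ℝ)) *
          (|r - x₁| * |r - x₂|) ^ (-(1 / 3 : ℝ)) := by
        rw [mul_rpow (exp_pos d).le (by positivity), mul_rpow hρ.le hdist.le, ← exp_mul,
          mul_assoc]
        ring_nf
    _ ≤ _ := by
        gcongr
        have := mul_rpow_le_add_rpow_two_mul_div_two (abs_nonneg (r - x₁)) (abs_nonneg (r - x₂))
          (-(1 / 3))
        rwa [show (2 : ℝ) * -(1 / 3) = -(2 / 3) by norm_num] at this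

theorem integral_mnorm_conj_rpow_le (d : ℝ) {w : frakr} (hw : w ≠ 0) :
    ∫ r in (-1 : ℝ)..2, mnorm (aMat d * uMat r * toMat w * uMat (-r) * aMat (-d)) ^ (-(1 / 3 : ℝ)) ≤
      6 * 6 ^ (1 / 3 : ℝ) * exp (-d / 3) * (rnorm w / 72) ^ (-(1 / 3 : ℝ)) := by
  obtain ⟨x₁, x₂, hx₁, hx₂, h⟩ := exists_mnorm_conj_rpow_le d hw
  set c := exp (-d / 3) * (rnorm w / 72) ^ (-(1 / 3 : ℝ))
  have hc : 0 ≤ c := mul_nonneg (exp_pos _).le (rpow_nonneg (by linarith [rnorm_pos hw]) _)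
  have hp : (-1 : ℝ) < -(2 / 3) := by norm_num
  have hint (x : ℝ) := intervalIntegrable_abs_sub_rpow hp x (-1) 2
  have hbound {x : ℝ} (hx : |x| ≤ 4) :
      ∫ r in (-1 : ℝ)..2, |r - x| ^ (-(2 / 3 : ℝ)) ≤ 6 * 6 ^ (1 / 3 : ℝ) := by
    obtain ⟨hx₀, hx₁⟩ := abs_le.mp hx
    refine (integral_abs_sub_rpow_le hp (c := 6) (by norm_num) (by linarith)
      (by linarith)).trans_eq ?_
    norm_num
    ring
  have hae : ∀ᵐ r ∂volume.restrict (Set.Ioc (-1 : ℝ) 2),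
      mnorm (aMat d * uMat r * toMat w * uMat (-r) * aMat (-d)) ^ (-(1 / 3 : ℝ)) ≤
        c * ((|r - x₁| ^ (-(2 / 3 : ℝ)) + |r - x₂| ^ (-(2 / 3 : ℝ))) / 2) := by
    filter_upwards [ae_restrict_mem measurableSet_Ioc,
      ae_restrict_of_ae (Measure.ae_ne volume x₁), ae_restrict_of_ae (Measure.ae_ne volume x₂)]
      with r hr hr₁ hr₂
    exact h r (abs_le.mpr ⟨by linarith [hr.1], hr.2⟩) hr₁ hr₂
  calc _ ≤ ∫ r in (-1 : ℝ)..2,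
        c * ((|r - x₁| ^ (-(2 / 3 : ℝ)) + |r - x₂| ^ (-(2 / 3 : ℝ))) / 2) := by
        rw [intervalIntegral.integral_of_le (by norm_num),
          intervalIntegral.integral_of_le (by norm_num)]
        refine integral_mono_of_nonneg
          (ae_of_all _ fun r => rpow_nonneg (le_max_of_le_left (abs_nonneg _)) _) ?_ hae
        exact (intervalIntegrable_iff_integrableOn_Ioc_of_le (by norm_num)).mp
          (((hint x₁).add (hint x₂)).div_const 2 |>.const_mul c)
    _ = c * ((∫ r in (-1 : ℝ)..2, |r - x₁| ^ (-(2 / 3 : ℝ))) +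
          ∫ r in (-1 : ℝ)..2, |r - x₂| ^ (-(2 / 3 : ℝ))) / 2 := by
        rw [intervalIntegral.integral_const_mul, intervalIntegral.integral_div,
          intervalIntegral.integral_add (hint x₁) (hint x₂), mul_div_assoc]
    _ ≤ c * (6 * 6 ^ (1 / 3 : ℝ) + 6 * 6 ^ (1 / 3 : ℝ)) / 2 := by
        gcongr
        exacts [hbound hx₁, hbound hx₂]
    _ = _ := by ring

/-- Lemma `lem: linear algebra`: there is an absolute constant `C' > 0`
such that for every `d ≥ 0` and every nonzero `w ∈ 𝔯`,
`(1/3) ∫_{−1}^{2} ‖Ad(a_d u_r) w‖^{−1/3} dr ≤ C' e^{−d/3} ‖w‖^{−1/3}`,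
where `Ad(a_d u_r) w = (a_d u_r) w (a_d u_r)^{−1} = a_d u_r w u_{−r} a_{−d}`. -/
theorem statement4 :
    ∃ C' : ℝ, 0 < C' ∧
      ∀ d : ℝ, 0 ≤ d → ∀ w : frakr, w ≠ 0 →
        (1 / 3) * ∫ r in (-1 : ℝ)..2,
            mnorm (aMat d * uMat r * toMat w * uMat (-r) * aMat (-d)) ^ (-(1 / 3 : ℝ)) ≤
          C' * Real.exp (-d / 3) * rnorm w ^ (-(1 / 3 : ℝ)) := by
  refine ⟨2 * 6 ^ (1 / 3 : ℝ) * 72 ^ (1 / 3 : ℝ), by positivity, fun d _ w hw => ?_⟩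
  have hscale : (rnorm w / 72) ^ (-(1 / 3 : ℝ)) = 72 ^ (1 / 3 : ℝ) * rnorm w ^ (-(1 / 3 : ℝ)) := by
    rw [div_rpow (rnorm_pos hw).le (by norm_num), rpow_neg (by norm_num : (0 : ℝ) ≤ 72),
      div_inv_eq_mul, mul_comm]
  calc _ ≤ 1 / 3 * (6 * 6 ^ (1 / 3 : ℝ) * exp (-d / 3) * (rnorm w / 72) ^ (-(1 / 3 : ℝ))) := by
        gcongr
        exact integral_mnorm_conj_rpow_le d hw
    _ = _ := by rw [hscale]; ring
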